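/- arXiv:1308.4832 — 2 statements merged into one kernel-verified Lean document; each statement's English description precedes it below -/
import Mathlib

section
/- Let k be a field, A a finite-dimensional commutative unital k-algebra with basis (e_α)_{α∈ι}, and L a finite-dimensional Lie algebra over k with basis (f_i)_{i∈ι'} (ι, ι' finite). Let g^S be the matrix of the trace form τ_A of A in the basis (e_α), g the matrix of the Killing form κ_L of L in the basis (f_i), and g^E the matrix of the Killing form of the expanded Lie algebra A ⊗[k] L in the tensor-product basis (e_α ⊗ f_i). Then det(g^E) = det(g^S)^{dim L} · det(g)^{dim A}. -/
/-!
Since `ad (a ⊗ x) = m_a ⊗ ad x` and the trace is multiplicative on tensor products of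
endomorphisms, the Killing form of `A ⊗[k] L` is the tensor product of `τ_A` and `κ_L`. Its
matrix in the product basis is therefore the Kronecker product `g^S ⊗ₖ g`, and
`det (X ⊗ₖ Y) = det X ^ card κ * det Y ^ card ι` for square `X`, `Y` indexed by `ι`, `κ`.
-/

open scoped TensorProduct Kronecker

noncomputable instance expandedLieAlgebra (k A L : Type*) [Field k] [CommRing A] [Algebra k A]
    [LieRing L] [LieAlgebra k L] : LieAlgebra k (A ⊗[k] L) where
  lie_smul c x y := by
    rw [← algebraMap_smul A c y, lie_smul, algebraMap_smul]

theorem LinearMap.BilinForm.toMatrix₂_tmul {R M₁ M₂ ι₁ ι₂ κ₁ κ₂ : Type*} [CommSemiring R]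
    [AddCommMonoid M₁] [Module R M₁] [AddCommMonoid M₂] [Module R M₂]
    [Fintype ι₁] [Fintype ι₂] [Fintype κ₁] [Fintype κ₂]
    [DecidableEq ι₁] [DecidableEq ι₂] [DecidableEq κ₁] [DecidableEq κ₂]
    (b₁ : Module.Basis ι₁ R M₁) (c₁ : Module.Basis κ₁ R M₁)
    (b₂ : Module.Basis ι₂ R M₂) (c₂ : Module.Basis κ₂ R M₂)
    (B₁ : LinearMap.BilinForm R M₁) (B₂ : LinearMap.BilinForm R M₂) :
    LinearMap.toMatrix₂ (b₁.tensorProduct b₂) (c₁.tensorProduct c₂) (B₁.tmul B₂)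
      = LinearMap.toMatrix₂ b₁ c₁ B₁ ⊗ₖ LinearMap.toMatrix₂ b₂ c₂ B₂ := by
  ext ⟨i₁, i₂⟩ ⟨j₁, j₂⟩
  simp only [LinearMap.toMatrix₂_apply, Matrix.kroneckerMap_apply, Module.Basis.tensorProduct_apply,
    LinearMap.BilinForm.tensorDistrib_tmul, smul_eq_mul, mul_comm]

section Expansion

variable (k A L : Type*) [Field k] [CommRing A] [Algebra k A] [LieRing L] [LieAlgebra k L]

theorem LieAlgebra.ad_tmul (a : A) (x : L) :
    LieAlgebra.ad k (A ⊗[k] L) (a ⊗ₜ x)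
      = TensorProduct.map (LinearMap.mulLeft k a) (LieAlgebra.ad k L x) := by
  ext b y
  simp [LieAlgebra.ExtendScalars.bracket_tmul]

theorem killingForm_tensorProduct_eq_tmul [FiniteDimensional k A] [FiniteDimensional k L] :
    killingForm k (A ⊗[k] L) = (Algebra.traceForm k A).tmul (killingForm k L) := by
  refine TensorProduct.ext' fun a x => TensorProduct.ext' fun b y => ?_
  rw [killingForm_apply_apply, LieAlgebra.ad_tmul, LieAlgebra.ad_tmul, ← TensorProduct.map_comp,
    LinearMap.trace_tensorProduct', ← LinearMap.mulLeft_mul, LinearMap.BilinForm.tensorDistrib_tmul]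
  exact mul_comm _ _

end Expansion

theorem det_killingForm_expansion_general
    (k A L : Type*) (ι ι' : Type*) [Field k] [CommRing A] [Algebra k A]
    [LieRing L] [LieAlgebra k L]
    [Fintype ι] [Fintype ι'] [DecidableEq ι] [DecidableEq ι']
    (bA : Module.Basis ι k A) (bL : Module.Basis ι' k L) :
    (LinearMap.toMatrix₂ (bA.tensorProduct bL) (bA.tensorProduct bL)
        (killingForm k (A ⊗[k] L))).det
      = (LinearMap.toMatrix₂ bA bA (Algebra.traceForm k A)).det ^ (Module.finrank k L) *
        (LinearMap.toMatrix₂ bL bL (killingForm k L)).det ^ (Module.finrank k A) := by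
  have := Module.Finite.of_basis bA
  have := Module.Finite.of_basis bL
  rw [killingForm_tensorProduct_eq_tmul, LinearMap.BilinForm.toMatrix₂_tmul, Matrix.det_kronecker,
    Module.finrank_eq_card_basis bA, Module.finrank_eq_card_basis bL]

/-- `det(g^E) = det(g^S)^(dim L) * det(g)^(dim A)`, where `g^E`, `g^S` and `g` are the matrices
of the Killing form of the expanded algebra `A ⊗[k] L`, of the trace form of `A` and of the
Killing form of `L` respectively, in the given bases. -/
theorem det_killingForm_expansion
    (k A L : Type*) (ι ι' : Type*) [Field k] [CommRing A] [Algebra k A]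
    [LieRing L] [LieAlgebra k L]
    [Fintype ι] [Fintype ι'] [DecidableEq ι] [DecidableEq ι']
    [FiniteDimensional k A] [FiniteDimensional k L]
    (bA : Module.Basis ι k A) (bL : Module.Basis ι' k L) :
    (LinearMap.toMatrix₂ (bA.tensorProduct bL) (bA.tensorProduct bL)
        (killingForm k (A ⊗[k] L))).det
      = (LinearMap.toMatrix₂ bA bA (Algebra.traceForm k A)).det ^ (Module.finrank k L) *
        (LinearMap.toMatrix₂ bL bL (killingForm k L)).det ^ (Module.finrank k A) :=
  det_killingForm_expansion_general k A L ι ι' bA bL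
end

section
/- Let A be a finite-dimensional commutative unital ℝ-algebra whose trace form τ_A is positive definite (τ_A(a,a) > 0 for all a ≠ 0), and let L be a finite-dimensional real Lie algebra whose Killing form κ_L is negative definite (κ_L(x,x) < 0 for all x ≠ 0). Then the Killing form of the expanded Lie algebra A ⊗[ℝ] L is negative definite, i.e., κ_{A⊗L}(t,t) < 0 for every nonzero t ∈ A ⊗[ℝ] L. -/
open scoped TensorProduct

/-!
Choose a basis `eᵢ` of `A` that is orthogonal for the trace form and write `t = ∑ eᵢ ⊗ xᵢ`.
Since `ad (a ⊗ x) = m_a ⊗ ad x`, the Killing form of `A ⊗ L` is the product `τ_A · κ_L` on pure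
tensors, so `κ(t, t) = ∑ τ_A(eᵢ, eᵢ) κ_L(xᵢ, xᵢ)`: a sum of nonpositive terms, negative as soon
as some `xᵢ ≠ 0`.
-/

open TensorProduct

section Expansion

variable {k A L : Type*} [Field k] [CommRing A] [Algebra k A] [LieRing L] [LieAlgebra k L]

lemma ad_expansion_tmul (a : A) (x : L) :
    LieAlgebra.ad k (A ⊗[k] L) (a ⊗ₜ x) = map (LinearMap.mulLeft k a) (LieAlgebra.ad k L x) := by
  ext b y
  simp [LieAlgebra.ExtendScalars.bracket_tmul]

variable [FiniteDimensional k A] [FiniteDimensional k L]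

lemma killingForm_expansion_tmul (a b : A) (x y : L) :
    killingForm k (A ⊗[k] L) (a ⊗ₜ x) (b ⊗ₜ y) =
      Algebra.traceForm k A a b * killingForm k L x y := by
  rw [killingForm_apply_apply, ad_expansion_tmul, ad_expansion_tmul, ← map_comp,
    LinearMap.trace_tensorProduct', killingForm_apply_apply, Algebra.traceForm_apply,
    Algebra.trace_apply, ← LinearMap.mulLeft_mul]
  rfl

lemma killingForm_expansion_sum_tmul_of_isOrthoᵢ {ι : Type*} [Fintype ι] {e : ι → A}
    (he : (Algebra.traceForm k A).IsOrthoᵢ e) (x : ι → L) :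
    killingForm k (A ⊗[k] L) (∑ i, e i ⊗ₜ x i) (∑ i, e i ⊗ₜ x i) =
      ∑ i, Algebra.traceForm k A (e i) (e i) * killingForm k L (x i) (x i) := by
  simp only [map_sum, LinearMap.sum_apply, killingForm_expansion_tmul]
  exact Finset.sum_congr rfl fun i _ => Finset.sum_eq_single i (fun j _ hji => by rw [he hji, zero_mul]) (by simp)

end Expansion

lemma exists_sum_tmul_eq {R M N ι : Type*} [CommSemiring R] [AddCommMonoid M] [Module R M]
    [AddCommMonoid N] [Module R N] [Fintype ι] (e : Module.Basis ι R M) {t : M ⊗[R] N}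
    (ht : t ≠ 0) : ∃ x : ι → N, ∑ i, e i ⊗ₜ x i = t ∧ ∃ i, x i ≠ 0 := by
  classical
  refine ⟨equivFinsuppOfBasisLeft e t, ?_, ?_⟩
  · conv_rhs => rw [← (equivFinsuppOfBasisLeft e).symm_apply_apply t]
    rw [equivFinsuppOfBasisLeft_symm_apply]
    exact (Finsupp.sum_fintype _ _ fun _ => by simp).symm
  · by_contra! h
    exact ht ((equivFinsuppOfBasisLeft e).map_eq_zero_iff.mp (Finsupp.ext h))

/-- If the trace form of `A` is positive definite and the Killing form of `L` is negative
definite (`L` compact), then the Killing form of the expanded Lie algebra `A ⊗[ℝ] L` is negative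
definite (the expansion is compact). -/
theorem killingForm_expansion_negDef
    (A L : Type*) [CommRing A] [Algebra ℝ A] [FiniteDimensional ℝ A]
    [LieRing L] [LieAlgebra ℝ L] [FiniteDimensional ℝ L]
    (hA : ∀ a : A, a ≠ 0 → 0 < Algebra.traceForm ℝ A a a)
    (hL : ∀ x : L, x ≠ 0 → killingForm ℝ L x x < 0) :
    ∀ t : A ⊗[ℝ] L, t ≠ 0 → killingForm ℝ (A ⊗[ℝ] L) t t < 0 := by
  intro t ht
  have : Invertible (2 : ℝ) := invertibleOfNonzero two_ne_zero
  obtain ⟨e, he⟩ := LinearMap.BilinForm.exists_orthogonal_basis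
    (LinearMap.BilinForm.isSymm_iff.mp (Algebra.traceForm_isSymm (R := ℝ) (S := A)))
  obtain ⟨x, rfl, i₀, hi₀⟩ := exists_sum_tmul_eq e ht
  have hterm : ∀ i, x i ≠ 0 →
      Algebra.traceForm ℝ A (e i) (e i) * killingForm ℝ L (x i) (x i) < 0 :=
    fun i hi => mul_neg_of_pos_of_neg (hA _ (e.ne_zero i)) (hL _ hi)
  rw [killingForm_expansion_sum_tmul_of_isOrthoᵢ he]
  refine Finset.sum_neg' (fun i _ => ?_) ⟨i₀, Finset.mem_univ _, hterm i₀ hi₀⟩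
  rcases eq_or_ne (x i) 0 with hi | hi
  · simp [hi]
  · exact (hterm i hi).le
end
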